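/- Let ζ < 0, let τ ∈ ℝ, and let F : ℝ → ℝ be a cumulative distribution function such that F(x) < 1 for every x < τ and F(x) = 1 for every x ≥ τ (so the right endpoint of the support of F is τ), and write F̄ = 1 − F for the survival function. Then the following are equivalent: (i) there exist a sequence (a_n) of positive real numbers and a sequence (b_n) of real numbers such that for every x ∈ ℝ with 1 + ζx > 0, (F(a_n · x + b_n))^n converges to exp(−(1+ζx)^{−1/ζ}) as n → ∞; (ii) there exists a function δ : ℝ → ℝ with δ(η) > 0 for all η < τ sufficiently close to τ, such that for every x ∈ ℝ with 1 + ζx > 0, F̄(η + δ(η)·x) / F̄(η) converges to (1+ζx)^{−1/ζ} as η → τ from the left (along the filter of neighborhoods of τ within (−∞, τ)). -/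

import Mathlib

/-!
Write `F̄ = 1 - F` and `φ x = (1 + ζ x) ^ (-1 / ζ)`. Since `(1 - gₙ) ^ n → exp (-L)` exactly when
`n gₙ → L`, condition (i) says that `n F̄ (aₙ x + bₙ) → φ x`.

For (i) ⇒ (ii) take `δ η = a_N` with `N = ⌊1 / F̄ η⌋₊`, so that `N F̄ η → 1`. As `F̄` is antitone
and `φ` is continuous and strictly decreasing with `φ 0 = 1`, for `w < x < w'` the point
`η + a_N x` eventually lies between `a_N w' + b_N` and `a_N w + b_N`, which squeezes
`F̄ (η + δ η x) / F̄ η` between numbers close to `φ w'` and `φ w`.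

For (ii) ⇒ (i) take `bₙ` the `(1 - 1/n)`-quantile of `F` and `aₙ = δ bₙ`. Right-continuity gives
`n F̄ bₙ ≤ 1`; below `bₙ` the tail exceeds `1/n`, and the ratio limit at small `x < 0` turns this
into `n F̄ bₙ → 1`, hence `n F̄ (aₙ x + bₙ) = n F̄ bₙ · F̄ (bₙ + δ bₙ x) / F̄ bₙ → φ x`.
-/

open Filter Topology Set

theorem tendsto_one_sub_pow_of_tendsto_natCast_mul {g : ℕ → ℝ} {L : ℝ}
    (h : Tendsto (fun n : ℕ => n * g n) atTop (𝓝 L)) :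
    Tendsto (fun n => (1 - g n) ^ n) atTop (𝓝 (Real.exp (-L))) := by
  have h' : Tendsto (fun n : ℕ => n * -g n) atTop (𝓝 (-L)) := by simpa only [mul_neg] using h.neg
  simpa only [sub_eq_add_neg] using Real.tendsto_one_add_pow_exp_of_tendsto h'

theorem tendsto_natCast_mul_of_tendsto_one_sub_pow {g : ℕ → ℝ} {L : ℝ} (hg : ∀ n, g n ≤ 1)
    (h : Tendsto (fun n => (1 - g n) ^ n) atTop (𝓝 (Real.exp (-L)))) :
    Tendsto (fun n : ℕ => n * g n) atTop (𝓝 L) := by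
  have hcmp (c : ℝ) : Tendsto (fun n : ℕ => (1 - c / n) ^ n) atTop (𝓝 (Real.exp (-c))) := by
    simpa only [sub_eq_add_neg, neg_div] using Real.tendsto_one_add_div_pow_exp (-c)
  refine tendsto_order.2 ⟨fun c hc => ?_, fun c hc => ?_⟩
  · have hc_div : Tendsto (fun n : ℕ => c / n) atTop (𝓝 0) :=
      tendsto_const_div_atTop_nhds_zero_nat c
    filter_upwards [h.eventually_lt (hcmp c) (Real.exp_lt_exp.2 (neg_lt_neg hc)),
      hc_div.eventually_le_const one_pos, eventually_gt_atTop 0] with n hlt hle hn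
    by_contra! hgc
    have hgn : g n ≤ c / n := by rwa [le_div_iff₀ (by positivity), mul_comm]
    have := pow_le_pow_left₀ (sub_nonneg.2 hle) (sub_le_sub_left hgn 1) n
    linarith
  · filter_upwards [(hcmp c).eventually_lt h (Real.exp_lt_exp.2 (neg_lt_neg hc)),
      eventually_gt_atTop 0] with n hlt hn
    by_contra! hgc
    have hgn : c / n ≤ g n := by rwa [div_le_iff₀ (by positivity), mul_comm]
    have := pow_le_pow_left₀ (sub_nonneg.2 (hg n)) (sub_le_sub_left hgn 1) n
    linarith

structure IsNormalizedTail (φ : ℝ → ℝ) (D : Set ℝ) : Prop where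
  isOpen : IsOpen D
  zero_mem : (0 : ℝ) ∈ D
  map_zero : φ 0 = 1
  strictAntiOn : StrictAntiOn φ D
  continuousOn : ContinuousOn φ D

namespace IsNormalizedTail

variable {φ : ℝ → ℝ} {D : Set ℝ}

theorem continuousAt (hφ : IsNormalizedTail φ D) {x : ℝ} (hx : x ∈ D) : ContinuousAt φ x :=
  hφ.continuousOn.continuousAt (hφ.isOpen.mem_nhds hx)

theorem one_lt_of_neg (hφ : IsNormalizedTail φ D) {u : ℝ} (hu : u ∈ D) (hu₀ : u < 0) :
    1 < φ u :=
  hφ.map_zero ▸ hφ.strictAntiOn hu hφ.zero_mem hu₀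

theorem lt_one_of_pos (hφ : IsNormalizedTail φ D) {v : ℝ} (hv : v ∈ D) (hv₀ : 0 < v) :
    φ v < 1 :=
  hφ.map_zero ▸ hφ.strictAntiOn hφ.zero_mem hv hv₀

theorem eventually_mem_and_sub_mem (hφ : IsNormalizedTail φ D) {x : ℝ} (hx : x ∈ D) :
    ∀ᶠ w in 𝓝 x, w ∈ D ∧ w - x ∈ D := by
  have hsub : Tendsto (fun w => w - x) (𝓝 x) (𝓝 0) := by
    simpa using (continuous_sub_right x).tendsto x
  exact (hφ.isOpen.eventually_mem hx).and (hsub.eventually (hφ.isOpen.mem_nhds hφ.zero_mem))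

theorem exists_pos_lt_one (hφ : IsNormalizedTail φ D) : ∃ x ∈ D, 0 < φ x ∧ φ x < 1 := by
  obtain ⟨x, hx₀, hxD, hφx⟩ := ((hφ.isOpen.eventually_mem hφ.zero_mem).and
    ((hφ.continuousAt hφ.zero_mem).eventually_const_lt (hφ.map_zero ▸ one_pos))).exists_gt
  exact ⟨x, hxD, hφx, hφ.lt_one_of_pos hxD hx₀⟩

end IsNormalizedTail

noncomputable def genParetoTail (ζ x : ℝ) : ℝ := (1 + ζ * x) ^ (-1 / ζ)

theorem isNormalizedTail_genParetoTail {ζ : ℝ} (hζ : ζ ≠ 0) :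
    IsNormalizedTail (genParetoTail ζ) {x | 0 < 1 + ζ * x} where
  isOpen := isOpen_lt continuous_const (by fun_prop)
  zero_mem := by simp
  map_zero := by simp [genParetoTail]
  strictAntiOn x hx y hy hxy := by
    simp only [mem_ofPred_eq] at hx hy
    rcases hζ.lt_or_gt with hneg | hpos
    · exact Real.rpow_lt_rpow hy.le (by nlinarith) (div_pos_of_neg_of_neg (by norm_num) hneg)
    · exact Real.rpow_lt_rpow_of_neg hx (by nlinarith) (div_neg_of_neg_of_pos (by norm_num) hpos)
  continuousOn x hx :=
    ((continuous_const.add (continuous_const.mul continuous_id)).continuousAt.rpow_const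
      (Or.inl hx.ne')).continuousWithinAt

theorem tendsto_natFloor_inv_mul {ι : Type*} {l : Filter ι} {g : ι → ℝ}
    (hg : Tendsto g l (𝓝[>] 0)) : Tendsto (fun i => (⌊(g i)⁻¹⌋₊ : ℝ) * g i) l (𝓝 1) :=
  (tendsto_nat_floor_div_atTop.comp hg.inv_tendsto_nhdsGT_zero).congr fun i => by
    simp [div_eq_mul_inv]

theorem Antitone.eventually_lt_of_tendsto_natCast_mul {ι : Type*} {l : Filter ι} {G : ℝ → ℝ}
    (hG : Antitone G) {N : ι → ℕ} {p q : ι → ℝ} {α β : ℝ}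
    (hp : Tendsto (fun i => N i * G (p i)) l (𝓝 α))
    (hq : Tendsto (fun i => N i * G (q i)) l (𝓝 β)) (hαβ : α < β) :
    ∀ᶠ i in l, q i < p i :=
  (hp.eventually_lt hq hαβ).mono fun _ h =>
    hG.reflect_lt (lt_of_mul_lt_mul_left h (Nat.cast_nonneg _))

namespace IsNormalizedTail

variable {φ : ℝ → ℝ} {D : Set ℝ}

theorem tendsto_ratio (hφ : IsNormalizedTail φ D) {G : ℝ → ℝ} (hG : Antitone G)
    {a b : ℕ → ℝ}
    (hab : ∀ x ∈ D, Tendsto (fun n : ℕ => n * G (a n * x + b n)) atTop (𝓝 (φ x)))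
    {l : Filter ℝ} {N : ℝ → ℕ} (hN : Tendsto N l atTop)
    (hNG : Tendsto (fun η => N η * G η) l (𝓝 1)) {x : ℝ} (hx : x ∈ D) :
    Tendsto (fun η => G (η + a (N η) * x) / G η) l (𝓝 (φ x)) := by
  have hG_pos : ∀ᶠ η in l, 0 < G η :=
    (hNG.eventually_const_lt one_pos).mono fun η h => pos_of_mul_pos_right h (Nat.cast_nonneg _)
  have hbound : ∀ w ∈ D, Tendsto (fun η => G (a (N η) * w + b (N η)) / G η) l (𝓝 (φ w)) := by
    intro w hw
    refine (div_one (φ w) ▸ ((hab w hw).comp hN).div hNG one_ne_zero).congr' ?_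
    filter_upwards [hN.eventually_ne_atTop 0] with η hη
    exact mul_div_mul_left _ _ (Nat.cast_ne_zero.2 hη)
  have hshift : ∀ w ∈ D, w - x ∈ D →
      Tendsto (fun η => N η * G (a (N η) * (w - x) + b (N η))) l (𝓝 (φ (w - x))) :=
    fun w _ hwx => (hab _ hwx).comp hN
  refine tendsto_order.2 ⟨fun c hc => ?_, fun c hc => ?_⟩
  · obtain ⟨w, hxw, ⟨hwD, hwxD⟩, hcw⟩ := ((hφ.eventually_mem_and_sub_mem hx).and
      ((hφ.continuousAt hx).eventually_const_lt hc)).exists_gt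
    have hpos := hG.eventually_lt_of_tendsto_natCast_mul (hshift w hwD hwxD) hNG
      (hφ.lt_one_of_pos hwxD (sub_pos.2 hxw))
    filter_upwards [hG_pos, hpos, (hbound w hwD).eventually_const_lt hcw] with η hη hηw hcη
    refine hcη.trans_le (div_le_div_of_nonneg_right (hG ?_) hη.le)
    linarith [mul_sub (a (N η)) w x]
  · obtain ⟨w, hwx, ⟨hwD, hwxD⟩, hcw⟩ := ((hφ.eventually_mem_and_sub_mem hx).and
      ((hφ.continuousAt hx).eventually_lt_const hc)).exists_lt
    have hpos := hG.eventually_lt_of_tendsto_natCast_mul hNG (hshift w hwD hwxD)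
      (hφ.one_lt_of_neg hwxD (sub_neg.2 hwx))
    filter_upwards [hG_pos, hpos, (hbound w hwD).eventually_lt_const hcw] with η hη hηw hcη
    refine lt_of_le_of_lt (div_le_div_of_nonneg_right (hG ?_) hη.le) hcη
    linarith [mul_sub (a (N η)) w x]

end IsNormalizedTail

noncomputable def quantile (F : ℝ → ℝ) (p : ℝ) : ℝ := sInf {x | p ≤ F x}

section Quantile

variable {F : ℝ → ℝ} {p y : ℝ}

theorem le_apply_quantile (hmono : Monotone F)
    (hrc : ContinuousWithinAt F (Ici (quantile F p)) (quantile F p)) (hne : ∃ x, p ≤ F x) :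
    p ≤ F (quantile F p) := by
  refine ge_of_tendsto (hrc.mono Ioi_subset_Ici_self) ?_
  filter_upwards [self_mem_nhdsWithin] with z hz
  obtain ⟨x, hx, hxz⟩ := exists_lt_of_csInf_lt hne hz
  exact le_trans hx (hmono hxz.le)

theorem quantile_le (hbdd : BddBelow {x | p ≤ F x}) (h : p ≤ F y) : quantile F p ≤ y :=
  csInf_le hbdd h

theorem apply_lt_of_lt_quantile (hbdd : BddBelow {x | p ≤ F x}) (h : y < quantile F p) :
    F y < p :=
  lt_of_not_ge fun hy => (quantile_le hbdd hy).not_gt h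

theorem bddBelow_setOf_le_apply (hbot : Tendsto F atBot (𝓝 0)) (hp : 0 < p) :
    BddBelow {x | p ≤ F x} := by
  obtain ⟨x₀, hx₀⟩ := eventually_atBot.1 (hbot.eventually_lt_const hp)
  exact ⟨x₀, fun x hx => le_of_not_gt fun hlt => (hx₀ x hlt.le).not_ge hx⟩

end Quantile

section DistributionFunction

variable {F : ℝ → ℝ} {τ : ℝ} {φ : ℝ → ℝ} {D : Set ℝ}

theorem tendsto_nhdsLT_one_of_exists_lt (hlt : ∀ x < τ, F x < 1) (hmono : Monotone F)
    (h : ∀ c < 1, ∃ x < τ, c < F x) : Tendsto F (𝓝[<] τ) (𝓝 1) := by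
  refine tendsto_order.2 ⟨fun c hc => ?_, fun c hc => ?_⟩
  · obtain ⟨x, hxτ, hcx⟩ := h c hc
    filter_upwards [Ioo_mem_nhdsLT hxτ] with η hη
    exact hcx.trans_le (hmono hη.1.le)
  · filter_upwards [self_mem_nhdsWithin] with η hη
    exact (hlt η hη).trans hc

theorem tendsto_nhdsLT_one_of_tendsto_ratio (hlt : ∀ x < τ, F x < 1)
    (heq : ∀ x, τ ≤ x → F x = 1) (hmono : Monotone F) {p : ℝ → ℝ} {r : ℝ}
    (hr₀ : 0 < r) (hr₁ : r < 1)
    (h : Tendsto (fun η => (1 - F (p η)) / (1 - F η)) (𝓝[<] τ) (𝓝 r)) :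
    Tendsto F (𝓝[<] τ) (𝓝 1) := by
  set s := sSup (F '' Iio τ)
  have hbdd : BddAbove (F '' Iio τ) := ⟨1, by rintro _ ⟨x, hx, rfl⟩; exact (hlt x hx).le⟩
  have hle : ∀ x < τ, F x ≤ s := fun x hx => le_csSup hbdd ⟨x, hx, rfl⟩
  have hs₁ : s ≤ 1 :=
    csSup_le (nonempty_Iio.image F) (by rintro _ ⟨x, hx, rfl⟩; exact (hlt x hx).le)
  suffices s = 1 from this ▸ hmono.tendsto_nhdsLT τ
  by_contra hs
  have hs₁ : s < 1 := hs₁.lt_of_ne hs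
  -- once `p η < τ` the ratio is at least `(1 - s) / (1 - F η) → 1 > r`
  have hlower : Tendsto (fun η => (1 - s) / (1 - F η)) (𝓝[<] τ) (𝓝 1) := by
    have := (tendsto_const_nhds (x := 1 - s)).div
      (tendsto_const_nhds.sub (hmono.tendsto_nhdsLT τ)) (sub_pos.2 hs₁).ne'
    rwa [div_self (sub_pos.2 hs₁).ne'] at this
  refine absurd (le_of_tendsto_of_tendsto hlower h ?_) (not_le.2 hr₁)
  filter_upwards [h.eventually_const_lt hr₀, self_mem_nhdsWithin] with η hη hητ
  have hpτ : p η < τ := by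
    by_contra! hpτ
    simp [heq _ hpτ] at hη
  exact div_le_div_of_nonneg_right (by linarith [hle _ hpτ]) (by linarith [hle η hητ])

theorem tendsto_quantile_nhdsLT (hmono : Monotone F)
    (hrc : ∀ x, ContinuousWithinAt F (Ici x) x) (hbot : Tendsto F atBot (𝓝 0))
    (hlt : ∀ x < τ, F x < 1) (heq : ∀ x, τ ≤ x → F x = 1) (hF : Tendsto F (𝓝[<] τ) (𝓝 1))
    {ι : Type*} {l : Filter ι} {p : ι → ℝ} (hp : Tendsto p l (𝓝[<] 1)) :
    Tendsto (fun i => quantile F (p i)) l (𝓝[<] τ) := by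
  obtain ⟨hp_nhds, hp₁⟩ := tendsto_nhdsWithin_iff.1 hp
  have hbelow : ∀ᶠ i in l, quantile F (p i) < τ := by
    filter_upwards [hp_nhds.eventually_const_lt one_pos, hp₁] with i hi₀ hi₁
    obtain ⟨η, hη, hητ⟩ := ((hF.eventually_const_lt hi₁).and self_mem_nhdsWithin).exists
    exact (quantile_le (bddBelow_setOf_le_apply hbot hi₀) hη.le).trans_lt hητ
  refine tendsto_nhdsWithin_iff.2
    ⟨tendsto_order.2 ⟨fun c hc => ?_, fun c hc => hbelow.mono fun i h => h.trans hc⟩, hbelow⟩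
  filter_upwards [hp_nhds.eventually_const_lt (hlt c hc), hp₁] with i hi hi₁
  exact hmono.reflect_lt (hi.trans_le
    (le_apply_quantile hmono (hrc _) ⟨τ, (heq τ le_rfl).symm ▸ hi₁.le⟩))

theorem tendsto_natCast_mul_one_sub_quantile
    (hφ : IsNormalizedTail φ D) (hmono : Monotone F)
    (hrc : ∀ x, ContinuousWithinAt F (Ici x) x) (hbot : Tendsto F atBot (𝓝 0))
    (hlt : ∀ x < τ, F x < 1) (heq : ∀ x, τ ≤ x → F x = 1)
    {δ : ℝ → ℝ} (hδpos : ∀ᶠ η in 𝓝[<] τ, 0 < δ η)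
    (hδ : ∀ x ∈ D, Tendsto (fun η => (1 - F (η + δ η * x)) / (1 - F η)) (𝓝[<] τ) (𝓝 (φ x)))
    (hb : Tendsto (fun n : ℕ => quantile F (1 - (n : ℝ)⁻¹)) atTop (𝓝[<] τ)) :
    Tendsto (fun n : ℕ => n * (1 - F (quantile F (1 - (n : ℝ)⁻¹)))) atTop (𝓝 1) := by
  set b := fun n : ℕ => quantile F (1 - (n : ℝ)⁻¹)
  have hbτ : ∀ᶠ n in atTop, b n < τ := (tendsto_nhdsWithin_iff.1 hb).2
  refine tendsto_order.2 ⟨fun c hc => ?_, fun c hc => ?_⟩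
  · rcases le_or_gt c 0 with hc₀ | hc₀
    · filter_upwards [hbτ, eventually_gt_atTop 0] with n hbn hn
      exact hc₀.trans_lt (mul_pos (Nat.cast_pos.2 hn) (sub_pos.2 (hlt _ hbn)))
    -- just below `b n` the tail exceeds `1 / n`; the ratio limit at a small `u < 0` transfers
    -- this to `b n` itself, up to the factor `c`
    obtain ⟨u, hu₀, huD, hφu⟩ := ((hφ.isOpen.eventually_mem hφ.zero_mem).and
      ((hφ.continuousAt hφ.zero_mem).eventually_lt_const
        (by rw [hφ.map_zero]; exact (one_lt_inv₀ hc₀).2 hc))).exists_lt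
    filter_upwards [hbτ, eventually_ge_atTop 2, hb.eventually hδpos,
      ((hδ u huD).comp hb).eventually_lt_const hφu] with n hbn hn hδn hratio
    have hn' : (2 : ℝ) ≤ n := by exact_mod_cast hn
    have hGb : 0 < 1 - F (b n) := sub_pos.2 (hlt _ hbn)
    have hbdd := bddBelow_setOf_le_apply hbot
      (sub_pos.2 (inv_lt_one_of_one_lt₀ (by linarith : (1 : ℝ) < n)))
    have hy : (n : ℝ)⁻¹ < 1 - F (b n + δ (b n) * u) := by
      linarith [apply_lt_of_lt_quantile hbdd
        (show b n + δ (b n) * u < b n by linarith [mul_neg_of_pos_of_neg hδn hu₀])]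
    rw [Function.comp_apply, div_lt_iff₀ hGb] at hratio
    have key := hy.trans hratio
    rw [inv_lt_iff_one_lt_mul₀ (by positivity)] at key
    exact (one_lt_div hc₀).1 (by rw [div_eq_mul_inv]; linarith)
  · filter_upwards [eventually_gt_atTop 0] with n hn
    have hn' : (0 : ℝ) < n := Nat.cast_pos.2 hn
    have hq := le_apply_quantile hmono (hrc (b n))
      ⟨τ, (heq τ le_rfl).symm ▸ sub_le_self 1 (inv_nonneg.2 hn'.le)⟩
    calc (n : ℝ) * (1 - F (b n)) ≤ n * (n : ℝ)⁻¹ := by gcongr; linarith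
      _ = 1 := mul_inv_cancel₀ hn'.ne'
      _ < c := hc

theorem exists_tendsto_ratio_of_tendsto_pow (hφ : IsNormalizedTail φ D) (hmono : Monotone F)
    (hbot : Tendsto F atBot (𝓝 0)) (hlt : ∀ x < τ, F x < 1) (heq : ∀ x, τ ≤ x → F x = 1)
    {a b : ℕ → ℝ} (ha : ∀ n, 0 < a n)
    (hab : ∀ x ∈ D, Tendsto (fun n : ℕ => F (a n * x + b n) ^ n) atTop (𝓝 (Real.exp (-φ x)))) :
    ∃ δ : ℝ → ℝ, (∀ᶠ η in 𝓝[<] τ, 0 < δ η) ∧ ∀ x ∈ D,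
      Tendsto (fun η => (1 - F (η + δ η * x)) / (1 - F η)) (𝓝[<] τ) (𝓝 (φ x)) := by
  have hA : ∀ x ∈ D, Tendsto (fun n : ℕ => n * (1 - F (a n * x + b n))) atTop (𝓝 (φ x)) :=
    fun x hx => tendsto_natCast_mul_of_tendsto_one_sub_pow
      (fun n => by linarith [hmono.le_of_tendsto hbot (a n * x + b n)])
      (by simpa only [sub_sub_cancel] using hab x hx)
  have hA₀ : Tendsto (fun n : ℕ => n * (1 - F (b n))) atTop (𝓝 1) := by
    simpa [hφ.map_zero] using hA 0 hφ.zero_mem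
  have hF : Tendsto F (𝓝[<] τ) (𝓝 1) := by
    refine tendsto_nhdsLT_one_of_exists_lt hlt hmono fun c hc => ?_
    have hGb : Tendsto (fun n : ℕ => 1 - F (b n)) atTop (𝓝 0) := by
      refine (hA₀.div_atTop tendsto_natCast_atTop_atTop).congr' ?_
      filter_upwards [eventually_ne_atTop 0] with n hn
      exact mul_div_cancel_left₀ _ (Nat.cast_ne_zero.2 hn)
    obtain ⟨n, hn₀, hn₁⟩ :=
      ((hA₀.eventually_const_lt one_pos).and (hGb.eventually_lt_const (sub_pos.2 hc))).exists
    refine ⟨b n, lt_of_not_ge fun h => ?_, by linarith⟩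
    simp [heq _ h] at hn₀
  have hG : Tendsto (fun η => 1 - F η) (𝓝[<] τ) (𝓝[>] 0) :=
    tendsto_nhdsWithin_iff.2 ⟨sub_self (1 : ℝ) ▸ tendsto_const_nhds.sub hF,
      eventually_mem_nhdsWithin.mono fun η hη => sub_pos.2 (hlt η hη)⟩
  exact ⟨fun η => a ⌊(1 - F η)⁻¹⌋₊, Eventually.of_forall fun η => ha _, fun x hx =>
    hφ.tendsto_ratio (fun _ _ h => sub_le_sub_left (hmono h) 1) hA
      (tendsto_nat_floor_atTop.comp hG.inv_tendsto_nhdsGT_zero) (tendsto_natFloor_inv_mul hG) hx⟩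

theorem exists_tendsto_pow_of_tendsto_ratio (hφ : IsNormalizedTail φ D) (hmono : Monotone F)
    (hrc : ∀ x, ContinuousWithinAt F (Ici x) x) (hbot : Tendsto F atBot (𝓝 0))
    (hlt : ∀ x < τ, F x < 1) (heq : ∀ x, τ ≤ x → F x = 1)
    {δ : ℝ → ℝ} (hδpos : ∀ᶠ η in 𝓝[<] τ, 0 < δ η)
    (hδ : ∀ x ∈ D, Tendsto (fun η => (1 - F (η + δ η * x)) / (1 - F η)) (𝓝[<] τ) (𝓝 (φ x))) :
    ∃ a b : ℕ → ℝ, (∀ n, 0 < a n) ∧ ∀ x ∈ D,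
      Tendsto (fun n : ℕ => F (a n * x + b n) ^ n) atTop (𝓝 (Real.exp (-φ x))) := by
  obtain ⟨x₀, hx₀, hφx₀, hφx₀'⟩ := hφ.exists_pos_lt_one
  have hF := tendsto_nhdsLT_one_of_tendsto_ratio hlt heq hmono hφx₀ hφx₀' (hδ x₀ hx₀)
  set b := fun n : ℕ => quantile F (1 - (n : ℝ)⁻¹)
  have hb : Tendsto b atTop (𝓝[<] τ) := by
    refine tendsto_quantile_nhdsLT hmono hrc hbot hlt heq hF (tendsto_nhdsWithin_iff.2
      ⟨by simpa using (tendsto_const_nhds (x := (1 : ℝ))).sub tendsto_inv_atTop_nhds_zero_nat,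
        ?_⟩)
    filter_upwards [eventually_gt_atTop 0] with n hn
    exact sub_lt_self (1 : ℝ) (inv_pos.2 (Nat.cast_pos.2 hn))
  have hnb := tendsto_natCast_mul_one_sub_quantile hφ hmono hrc hbot hlt heq hδpos hδ hb
  set a : ℕ → ℝ := fun n => if 0 < δ (b n) then δ (b n) else 1
  have ha : ∀ n, 0 < a n := fun n => by dsimp only [a]; split_ifs with h; exacts [h, one_pos]
  refine ⟨a, b, ha, fun x hx => ?_⟩
  have hlim : Tendsto (fun n : ℕ => n * (1 - F (a n * x + b n))) atTop (𝓝 (φ x)) := by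
    refine (one_mul (φ x) ▸ hnb.mul ((hδ x hx).comp hb)).congr' ?_
    filter_upwards [hb.eventually hδpos, (tendsto_nhdsWithin_iff.1 hb).2] with n hδn hbn
    rw [Function.comp_apply, mul_assoc, mul_div_cancel₀ _ (sub_pos.2 (hlt _ hbn)).ne']
    simp only [a, if_pos hδn, add_comm]
  simpa only [sub_sub_cancel] using tendsto_one_sub_pow_of_tendsto_natCast_mul hlim

end DistributionFunction

theorem pickands_balkema_deHaan_neg_general
    (ζ : ℝ) (hζ : ζ < 0) (τ : ℝ) (F : ℝ → ℝ)
    (hmono : Monotone F)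
    (hrc : ∀ x : ℝ, ContinuousWithinAt F (Set.Ici x) x)
    (hbot : Tendsto F atBot (𝓝 0))
    (hlt : ∀ x : ℝ, x < τ → F x < 1)
    (heq : ∀ x : ℝ, τ ≤ x → F x = 1) :
    (∃ (a b : ℕ → ℝ), (∀ n, 0 < a n) ∧
      ∀ x : ℝ, 1 + ζ * x > 0 →
        Tendsto (fun n : ℕ => (F (a n * x + b n)) ^ n) atTop
          (𝓝 (Real.exp (-((1 + ζ * x) ^ (-1 / ζ)))))) ↔
    (∃ δ : ℝ → ℝ, (∀ᶠ η in 𝓝[<] τ, 0 < δ η) ∧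
      ∀ x : ℝ, 1 + ζ * x > 0 →
        Tendsto (fun η : ℝ => (1 - F (η + δ η * x)) / (1 - F η)) (𝓝[<] τ)
          (𝓝 ((1 + ζ * x) ^ (-1 / ζ)))) := by
  have hφ := isNormalizedTail_genParetoTail hζ.ne
  constructor
  · rintro ⟨a, b, ha, hab⟩
    exact exists_tendsto_ratio_of_tendsto_pow hφ hmono hbot hlt heq ha hab
  · rintro ⟨δ, hδpos, hδ⟩
    exact exists_tendsto_pow_of_tendsto_ratio hφ hmono hrc hbot hlt heq hδpos hδ

/-- Pickands–Balkema–de Haan theorem, case ζ < 0 (finite right endpoint τ). -/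
theorem pickands_balkema_deHaan_neg
    (ζ : ℝ) (hζ : ζ < 0) (τ : ℝ) (F : ℝ → ℝ)
    (hmono : Monotone F)
    (hrc : ∀ x : ℝ, ContinuousWithinAt F (Set.Ici x) x)
    (hbot : Tendsto F atBot (𝓝 0))
    (htop : Tendsto F atTop (𝓝 1))
    (hlt : ∀ x : ℝ, x < τ → F x < 1)
    (heq : ∀ x : ℝ, τ ≤ x → F x = 1) :
    (∃ (a b : ℕ → ℝ), (∀ n, 0 < a n) ∧
      ∀ x : ℝ, 1 + ζ * x > 0 →
        Tendsto (fun n : ℕ => (F (a n * x + b n)) ^ n) atTop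
          (𝓝 (Real.exp (-((1 + ζ * x) ^ (-1 / ζ)))))) ↔
    (∃ δ : ℝ → ℝ, (∀ᶠ η in 𝓝[<] τ, 0 < δ η) ∧
      ∀ x : ℝ, 1 + ζ * x > 0 →
        Tendsto (fun η : ℝ => (1 - F (η + δ η * x)) / (1 - F η)) (𝓝[<] τ)
          (𝓝 ((1 + ζ * x) ^ (-1 / ζ)))) :=
  pickands_balkema_deHaan_neg_general ζ hζ τ F hmono hrc hbot hlt heq
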